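/- arXiv:1501.06986 — 5 statements merged into one kernel-verified Lean document; each statement's English description precedes it below -/
import Mathlib

section
/- Let 0 < H < 1/2. There exists a constant d_H, depending only on H, such that for all 0 < s < t one has |K_H(t,s)| ≤ d_H ( (t−s)^{H−1/2} + s^{H−1/2} ). -/
open MeasureTheory intervalIntegral Real

/-- The Beta function `β(x,y) = ∫_0^1 t^(x-1)(1-t)^(y-1) dt`. -/
noncomputable def betaFn (x y : ℝ) : ℝ := ∫ t in (0:ℝ)..1, t ^ (x - 1) * (1 - t) ^ (y - 1)

/-- The constant `c_H`. -/
noncomputable def cH (H : ℝ) : ℝ :=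
  (2 * H / ((1 - 2 * H) * betaFn (1 - 2 * H) (H + 1 / 2))) ^ ((1:ℝ) / 2)

/-- The kernel `K_H(t,s)` of fractional Brownian motion for `H < 1/2`. -/
noncomputable def KH (H t s : ℝ) : ℝ :=
  cH H * ((t / s) ^ (H - 1 / 2) * (t - s) ^ (H - 1 / 2) -
    (H - 1 / 2) * s ^ (1 / 2 - H) * ∫ u in s..t, u ^ (H - 3 / 2) * (u - s) ^ (H - 1 / 2))

section aux

variable {H s t : ℝ}

/-- Integrability of `(u-s)^(H-1/2)` (times a constant) on any interval. -/
lemma g_intable (hH0 : 0 < H) (c s a b : ℝ) :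
    IntervalIntegrable (fun u => c * (u - s) ^ (H - 1/2)) volume a b := by
  have hr : (-1:ℝ) < H - 1/2 := by linarith
  have h := (intervalIntegrable_rpow' (a := a - s) (b := b - s) hr).comp_sub_right s
  simpa using h.const_mul c

/-- Integrability of the kernel integrand on `[s,t]`. -/
lemma f_intable (hH0 : 0 < H) (hH : H < 1/2) (hs : 0 < s) (hst : s ≤ t) :
    IntervalIntegrable (fun u => u ^ (H - 3/2) * (u - s) ^ (H - 1/2)) volume s t := by
  have hg := g_intable hH0 (s ^ (H - 3/2)) s s t
  rw [intervalIntegrable_iff_integrableOn_Ioc_of_le hst] at hg ⊢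
  apply hg.mono'
  · have hc : ContinuousOn (fun u => u ^ (H - 3/2) * (u - s) ^ (H - 1/2)) (Set.Ioc s t) := by
      apply ContinuousOn.mul
      · exact continuousOn_id.rpow_const fun u hu => Or.inl (ne_of_gt (lt_trans hs hu.1))
      · exact (continuousOn_id.sub continuousOn_const).rpow_const
          fun u hu => Or.inl (by simpa [sub_eq_zero] using ne_of_gt hu.1)
    exact hc.aestronglyMeasurable measurableSet_Ioc
  · filter_upwards [ae_restrict_mem measurableSet_Ioc] with u hu
    have hu1 : s ≤ u := le_of_lt hu.1
    have h1 : (0:ℝ) ≤ u ^ (H - 3/2) := rpow_nonneg (by linarith) _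
    have h2 : (0:ℝ) ≤ (u - s) ^ (H - 1/2) := rpow_nonneg (by linarith) _
    rw [Real.norm_eq_abs, abs_of_nonneg (mul_nonneg h1 h2)]
    exact mul_le_mul_of_nonneg_right (rpow_le_rpow_of_nonpos hs hu1 (by linarith)) h2

/-- Near-part bound: if `s ≤ t ≤ 2s` then the integral is at most `s^(2H-1)/(H+1/2)`. -/
lemma int_near (hH0 : 0 < H) (hH : H < 1/2) (hs : 0 < s) (hst : s ≤ t) (ht2 : t ≤ 2*s) :
    (∫ u in s..t, u ^ (H - 3/2) * (u - s) ^ (H - 1/2)) ≤ s ^ (2*H - 1) / (H + 1/2) := by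
  have hr : (-1:ℝ) < H - 1/2 := by linarith
  have h12 : (0:ℝ) < H + 1/2 := by linarith
  have hg := g_intable hH0 (s ^ (H - 3/2)) s s t
  have hmono : (∫ u in s..t, u ^ (H - 3/2) * (u - s) ^ (H - 1/2)) ≤
      ∫ u in s..t, s ^ (H - 3/2) * (u - s) ^ (H - 1/2) := by
    refine integral_mono_on hst (f_intable hH0 hH hs hst) hg fun u hu => ?_
    have h2 : (0:ℝ) ≤ (u - s) ^ (H - 1/2) := rpow_nonneg (by linarith [hu.1]) _
    exact mul_le_mul_of_nonneg_right (rpow_le_rpow_of_nonpos hs hu.1 (by linarith)) h2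
  have hval : (∫ u in s..t, s ^ (H - 3/2) * (u - s) ^ (H - 1/2)) =
      s ^ (H - 3/2) * ((t - s) ^ (H + 1/2) / (H + 1/2)) := by
    rw [intervalIntegral.integral_const_mul]
    congr 1
    rw [intervalIntegral.integral_comp_sub_right (fun x => x ^ (H - 1/2)) s]
    rw [integral_rpow (Or.inl hr)]
    rw [sub_self, Real.zero_rpow (by linarith)]
    have he : H - 1/2 + 1 = H + 1/2 := by ring
    rw [he]; ring
  have hts : (t - s) ^ (H + 1/2) ≤ s ^ (H + 1/2) :=
    rpow_le_rpow (by linarith) (by linarith) (by linarith)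
  have hss : s ^ (H - 3/2) * s ^ (H + 1/2) = s ^ (2*H - 1) := by
    rw [← Real.rpow_add hs, show H - 3/2 + (H + 1/2) = 2*H - 1 by ring]
  have hnn : (0:ℝ) ≤ s ^ (H - 3/2) := rpow_nonneg hs.le _
  calc (∫ u in s..t, u ^ (H - 3/2) * (u - s) ^ (H - 1/2))
      ≤ s ^ (H - 3/2) * ((t - s) ^ (H + 1/2) / (H + 1/2)) := hval ▸ hmono
    _ ≤ s ^ (H - 3/2) * (s ^ (H + 1/2) / (H + 1/2)) := by
        apply mul_le_mul_of_nonneg_left _ hnn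
        exact div_le_div_of_nonneg_right hts h12.le
    _ = s ^ (2*H - 1) / (H + 1/2) := by rw [← hss]; ring

/-- Integrability of the kernel integrand on `[2s,t]` (away from the singularity). -/
lemma f_intable_far (hs : 0 < s) (h2t : 2*s ≤ t) :
    IntervalIntegrable (fun u => u ^ (H - 3/2) * (u - s) ^ (H - 1/2)) volume (2*s) t := by
  apply ContinuousOn.intervalIntegrable
  intro u hu
  rw [Set.uIcc_of_le h2t] at hu
  have hu0 : (0:ℝ) < u := by linarith [hu.1]
  have hus : s < u := by linarith [hu.1]
  apply ContinuousWithinAt.mul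
  · exact (continuousOn_id.rpow_const fun v hv => Or.inl (by
      rw [Set.uIcc_of_le h2t] at hv; have : (0:ℝ) < v := by linarith [hv.1]
      exact ne_of_gt this)) u (by rwa [Set.uIcc_of_le h2t])
  · exact ((continuousOn_id.sub continuousOn_const).rpow_const fun v hv => Or.inl (by
      rw [Set.uIcc_of_le h2t] at hv
      have : s < v := by linarith [hv.1]
      simpa [sub_eq_zero] using ne_of_gt this)) u (by rwa [Set.uIcc_of_le h2t])

/-- Far-part bound. -/
lemma int_far (hH0 : 0 < H) (hH : H < 1/2) (hs : 0 < s) (h2t : 2*s ≤ t) :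
    (∫ u in 2*s..t, u ^ (H - 3/2) * (u - s) ^ (H - 1/2)) ≤
      2 ^ (H - 1/2) * s ^ (2*H - 1) / (1 - 2*H) := by
  have h2H : (0:ℝ) < 1 - 2*H := by linarith
  have hh : IntervalIntegrable (fun u => 2 ^ ((1:ℝ)/2 - H) * u ^ (2*H - 2)) volume (2*s) t := by
    apply ContinuousOn.intervalIntegrable
    refine continuousOn_const.mul (continuousOn_id.rpow_const fun v hv => Or.inl ?_)
    rw [Set.uIcc_of_le h2t] at hv
    exact ne_of_gt (by simp only [id_eq]; linarith [hv.1])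
  have hmono : (∫ u in 2*s..t, u ^ (H - 3/2) * (u - s) ^ (H - 1/2)) ≤
      ∫ u in 2*s..t, 2 ^ ((1:ℝ)/2 - H) * u ^ (2*H - 2) := by
    refine integral_mono_on h2t (f_intable_far hs h2t) hh fun u hu => ?_
    have hu0 : (0:ℝ) < u := by linarith [hu.1]
    have hu2 : u / 2 ≤ u - s := by linarith [hu.1]
    have h1 : (u - s) ^ (H - 1/2) ≤ (u/2) ^ (H - 1/2) :=
      rpow_le_rpow_of_nonpos (by linarith) hu2 (by linarith)
    have h2 : (u/2) ^ (H - 1/2) = 2 ^ ((1:ℝ)/2 - H) * u ^ (H - 1/2) := by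
      rw [Real.div_rpow hu0.le (by norm_num : (0:ℝ) ≤ 2), div_eq_mul_inv,
        ← Real.rpow_neg (by norm_num : (0:ℝ) ≤ 2)]
      rw [show -(H - 1/2) = (1:ℝ)/2 - H by ring]; ring
    have h3 : (0:ℝ) ≤ u ^ (H - 3/2) := rpow_nonneg hu0.le _
    calc u ^ (H - 3/2) * (u - s) ^ (H - 1/2)
        ≤ u ^ (H - 3/2) * (2 ^ ((1:ℝ)/2 - H) * u ^ (H - 1/2)) := by
          exact mul_le_mul_of_nonneg_left (h2 ▸ h1) h3
      _ = 2 ^ ((1:ℝ)/2 - H) * u ^ (2*H - 2) := by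
          rw [show (2:ℝ)*H - 2 = (H - 3/2) + (H - 1/2) by ring, Real.rpow_add hu0]
          ring
  have hval : (∫ u in 2*s..t, 2 ^ ((1:ℝ)/2 - H) * u ^ (2*H - 2)) =
      2 ^ ((1:ℝ)/2 - H) * ((t ^ (2*H - 1) - (2*s) ^ (2*H - 1)) / (2*H - 1)) := by
    rw [intervalIntegral.integral_const_mul]
    congr 1
    rw [integral_rpow (Or.inr ⟨by intro hc; linarith,
      Set.notMem_uIcc_of_lt (by linarith) (by linarith)⟩)]
    rw [show 2*H - 2 + 1 = 2*H - 1 by ring]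
  have ht0 : (0:ℝ) ≤ t ^ (2*H - 1) := rpow_nonneg (by linarith) _
  have hkey : 2 ^ ((1:ℝ)/2 - H) * (2*s) ^ (2*H - 1) = 2 ^ (H - 1/2) * s ^ (2*H - 1) := by
    rw [Real.mul_rpow (by norm_num : (0:ℝ) ≤ 2) hs.le, ← mul_assoc,
      ← Real.rpow_add (by norm_num : (0:ℝ) < 2),
      show (1:ℝ)/2 - H + (2*H - 1) = H - 1/2 by ring]
  have hpos : (0:ℝ) < 2 ^ ((1:ℝ)/2 - H) := rpow_pos_of_pos (by norm_num) _
  calc (∫ u in 2*s..t, u ^ (H - 3/2) * (u - s) ^ (H - 1/2))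
      ≤ 2 ^ ((1:ℝ)/2 - H) * ((t ^ (2*H - 1) - (2*s) ^ (2*H - 1)) / (2*H - 1)) :=
        hval ▸ hmono
    _ = (2 ^ ((1:ℝ)/2 - H) * ((2*s) ^ (2*H - 1) - t ^ (2*H - 1))) / (1 - 2*H) := by
        rw [show (t ^ (2*H-1) - (2*s) ^ (2*H-1))/(2*H-1)
            = ((2*s) ^ (2*H-1) - t ^ (2*H-1))/(1-2*H) by
          rw [div_eq_div_iff (by linarith : (2:ℝ)*H-1 < 0).ne h2H.ne']; ring]
        rw [mul_div_assoc]
    _ ≤ (2 ^ ((1:ℝ)/2 - H) * (2*s) ^ (2*H - 1)) / (1 - 2*H) := by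
        apply div_le_div_of_nonneg_right _ h2H.le
        nlinarith
    _ = 2 ^ (H - 1/2) * s ^ (2*H - 1) / (1 - 2*H) := by rw [hkey]

/-- Combined bound on the singular integral. -/
lemma int_bound (hH0 : 0 < H) (hH : H < 1/2) (hs : 0 < s) (hst : s < t) :
    (∫ u in s..t, u ^ (H - 3/2) * (u - s) ^ (H - 1/2)) ≤
      ((H + 1/2)⁻¹ + 2 ^ (H - 1/2) / (1 - 2*H)) * s ^ (2*H - 1) := by
  have h2H : (0:ℝ) < 1 - 2*H := by linarith
  have h12 : (0:ℝ) < H + 1/2 := by linarith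
  have hsp : (0:ℝ) < s ^ (2*H - 1) := rpow_pos_of_pos hs _
  have h2p : (0:ℝ) < 2 ^ (H - 1/2) := rpow_pos_of_pos (by norm_num) _
  rcases le_or_gt t (2*s) with h | h
  · have h1 := int_near hH0 hH hs hst.le h
    have : (0:ℝ) ≤ 2 ^ (H - 1/2) / (1 - 2*H) * s ^ (2*H - 1) := by positivity
    calc (∫ u in s..t, u ^ (H - 3/2) * (u - s) ^ (H - 1/2))
        ≤ s ^ (2*H - 1) / (H + 1/2) := h1
      _ ≤ ((H + 1/2)⁻¹ + 2 ^ (H - 1/2) / (1 - 2*H)) * s ^ (2*H - 1) := by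
          rw [div_eq_inv_mul]; nlinarith
  · have hsplit := integral_add_adjacent_intervals (μ := volume)
      (f_intable hH0 hH hs (by linarith)) (f_intable_far hs h.le)
    have h1 := int_near hH0 hH hs (by linarith) le_rfl
    have h2 := int_far hH0 hH hs h.le
    rw [← hsplit]
    calc (∫ u in s..2*s, u ^ (H - 3/2) * (u - s) ^ (H - 1/2)) +
          ∫ u in 2*s..t, u ^ (H - 3/2) * (u - s) ^ (H - 1/2)
        ≤ s ^ (2*H - 1) / (H + 1/2) + 2 ^ (H - 1/2) * s ^ (2*H - 1) / (1 - 2*H) := by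
          exact add_le_add h1 h2
      _ = ((H + 1/2)⁻¹ + 2 ^ (H - 1/2) / (1 - 2*H)) * s ^ (2*H - 1) := by
          ring

end aux

/-- for `0 < H < 1/2` there is a constant `d_H`, depending only on `H`, such that
`|K_H(t,s)| ≤ d_H ((t-s)^{H-1/2} + s^{H-1/2})` for all `0 < s < t`. -/
theorem KH_bound (H : ℝ) (hH0 : 0 < H) (hH : H < 1 / 2) :
    ∃ dH : ℝ, 0 < dH ∧ ∀ s t : ℝ, 0 < s → s < t →
      |KH H t s| ≤ dH * ((t - s) ^ (H - 1 / 2) + s ^ (H - 1 / 2)) := by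
  have h2H : (0:ℝ) < 1 - 2*H := by linarith
  have h12 : (0:ℝ) < H + 1/2 := by linarith
  set M : ℝ := (H + 1/2)⁻¹ + 2 ^ (H - 1/2) / (1 - 2*H) with hMdef
  have hM : 0 < M := by positivity
  have hK : (0:ℝ) < (1/2 - H) * M := mul_pos (by linarith) hM
  refine ⟨(|cH H| + 1) * (1 + (1/2 - H) * M),
    mul_pos (by positivity) (by linarith), ?_⟩
  intro s t hs hst
  have hts : (0:ℝ) < t - s := by linarith
  set P : ℝ := (t - s) ^ (H - 1/2) with hPdef
  set Q : ℝ := s ^ (H - 1/2) with hQdef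
  have hP : 0 < P := rpow_pos_of_pos hts _
  have hQ : 0 < Q := rpow_pos_of_pos hs _
  set I : ℝ := ∫ u in s..t, u ^ (H - 3/2) * (u - s) ^ (H - 1/2) with hIdef
  have hI0 : 0 ≤ I := by
    refine intervalIntegral.integral_nonneg hst.le fun u hu => ?_
    exact mul_nonneg (rpow_nonneg (by linarith [hu.1]) _) (rpow_nonneg (by linarith [hu.1]) _)
  have hIb : I ≤ M * s ^ (2*H - 1) := int_bound hH0 (by linarith) hs hst
  have hA : (t / s) ^ (H - 1/2) * (t - s) ^ (H - 1/2) ≤ P := by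
    have h1 : (t / s) ^ (H - 1/2) ≤ 1 :=
      rpow_le_one_of_one_le_of_nonpos ((one_le_div hs).mpr hst.le) (by linarith)
    calc (t / s) ^ (H - 1/2) * (t - s) ^ (H - 1/2) ≤ 1 * P :=
        mul_le_mul_of_nonneg_right h1 hP.le
      _ = P := one_mul P
  have hA0 : 0 ≤ (t / s) ^ (H - 1/2) * (t - s) ^ (H - 1/2) :=
    mul_nonneg (rpow_nonneg (div_nonneg (by linarith) hs.le) _) (rpow_nonneg hts.le _)
  have hsQ : s ^ ((1:ℝ)/2 - H) * s ^ (2*H - 1) = Q := by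
    rw [hQdef, ← Real.rpow_add hs, show (1:ℝ)/2 - H + (2*H - 1) = H - 1/2 by ring]
  have hsH : (0:ℝ) < s ^ ((1:ℝ)/2 - H) := rpow_pos_of_pos hs _
  have hB : (1/2 - H) * s ^ ((1:ℝ)/2 - H) * I ≤ (1/2 - H) * M * Q := by
    have h1 : s ^ ((1:ℝ)/2 - H) * I ≤ s ^ ((1:ℝ)/2 - H) * (M * s ^ (2*H - 1)) :=
      mul_le_mul_of_nonneg_left hIb hsH.le
    have h2 : s ^ ((1:ℝ)/2 - H) * (M * s ^ (2*H - 1)) = M * Q := by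
      rw [← hsQ]; ring
    nlinarith [h1, h2]
  have hneg : (H - 1/2) * s ^ ((1:ℝ)/2 - H) * I ≤ 0 := by
    rw [mul_assoc]
    exact mul_nonpos_iff.mpr (Or.inr ⟨by linarith, mul_nonneg hsH.le hI0⟩)
  have habs : |KH H t s| = |cH H| *
      ((t / s) ^ (H - 1/2) * (t - s) ^ (H - 1/2) + (1/2 - H) * s ^ ((1:ℝ)/2 - H) * I) := by
    rw [KH, abs_mul, ← hIdef]
    congr 1
    rw [abs_of_nonneg (by linarith [hA0, hneg])]
    ring
  rw [habs]
  have hsum : (t / s) ^ (H - 1/2) * (t - s) ^ (H - 1/2) +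
      (1/2 - H) * s ^ ((1:ℝ)/2 - H) * I ≤ P + (1/2 - H) * M * Q := add_le_add hA hB
  have hc0 : (0:ℝ) ≤ |cH H| := abs_nonneg _
  calc |cH H| * ((t / s) ^ (H - 1/2) * (t - s) ^ (H - 1/2) +
        (1/2 - H) * s ^ ((1:ℝ)/2 - H) * I)
      ≤ |cH H| * (P + (1/2 - H) * M * Q) := mul_le_mul_of_nonneg_left hsum hc0
    _ ≤ (|cH H| + 1) * (1 + (1/2 - H) * M) * (P + Q) := by
        nlinarith [mul_nonneg hc0 hQ.le, mul_nonneg (mul_nonneg hc0 hK.le) hP.le,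
          mul_nonneg hK.le hP.le, mul_nonneg hK.le hQ.le, hP.le, hQ.le]
end

section
/- Let 0 < H < 1/2 and T > 0. There exists a constant k_H (depending only on H and T) such that for every measurable function φ : [0,T] → ℝ with ‖φ‖_K² < ∞, the expression (K_H^*φ)(s) is absolutely convergent for almost every s ∈ (0,T) and ∫_0^T (K_H^*φ)(s)² ds ≤ k_H ‖φ‖_K². -/
/-!
Since `(t/s)^{H-1/2} ≤ 1`, `|∂K_H/∂t(t,s)| ≲ (t-s)^{H-3/2}`, so the integral term of `(K_H^*φ)(s)`
is dominated by the inner integral of `‖φ‖_K`, which is finite for a.e. `s`. In `K_H(T,s)` the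
first summand is at most `(T-s)^{H-1/2}`, and splitting `∫_s^T u^{H-3/2}(u-s)^{H-1/2} du` at
`u = 2s` shows that this integral is `O(s^{2H-1})`; hence `|K_H(T,s)| ≲ (T-s)^{H-1/2} + s^{H-1/2}`,
whose square is controlled by the weight `(T-s)^{2H-1} + s^{2H-1}`. Conclude with
`(a + b)² ≤ 2(a² + b²)`.
-/

open MeasureTheory intervalIntegral Real

/-- The partial derivative `∂K_H/∂t(t,s)`. -/
noncomputable def KHt (H t s : ℝ) : ℝ :=
  cH H * (H - 1 / 2) * (t / s) ^ (H - 1 / 2) * (t - s) ^ (H - 3 / 2)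

/-- The operator `K_H^*`:
`(K_H^*φ)(s) = K_H(T,s) φ(s) + ∫_s^T (φ(t)-φ(s)) ∂K_H/∂t(t,s) dt`. -/
noncomputable def KHstar (H T : ℝ) (φ : ℝ → ℝ) (s : ℝ) : ℝ :=
  KH H T s * φ s + ∫ t in Set.Ioo s T, (φ t - φ s) * KHt H t s

/-- The square `‖φ‖_K²` of the seminorm `‖·‖_K`, as a Lebesgue integral with values in `[0,∞]`:
`∫_0^T φ(s)²[(T-s)^{2H-1}+s^{2H-1}] ds
  + ∫_0^T ( ∫_s^T |φ(t)-φ(s)| (t-s)^{H-3/2} dt )² ds`. -/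
noncomputable def normKsq (H T : ℝ) (φ : ℝ → ℝ) : ENNReal :=
  (∫⁻ s in Set.Ioo 0 T, ENNReal.ofReal (φ s ^ 2 * ((T - s) ^ (2 * H - 1) + s ^ (2 * H - 1)))) +
  ∫⁻ s in Set.Ioo 0 T,
    (∫⁻ t in Set.Ioo s T, ENNReal.ofReal (|φ t - φ s| * (t - s) ^ (H - 3 / 2))) ^ 2

open Set

section RpowKernel

variable {α s a b : ℝ}

lemma intervalIntegrable_rpow_sub (hα : -1 < α) (s a b : ℝ) :
    IntervalIntegrable (fun u => (u - s) ^ α) volume a b := by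
  simpa using (intervalIntegrable_rpow' (a := a - s) (b := b - s) hα).comp_sub_right s

lemma integral_rpow_sub (hα : -1 < α) (s b : ℝ) :
    ∫ u in s..b, (u - s) ^ α = (b - s) ^ (α + 1) / (α + 1) := by
  rw [integral_comp_sub_right (· ^ α), sub_self, integral_rpow (Or.inl hα),
    zero_rpow (by linarith), sub_zero]

lemma intervalIntegrable_rpow_mul_rpow_sub (hα : -1 < α) (ha : 0 < a) (hab : a ≤ b) (s : ℝ) :
    IntervalIntegrable (fun u => u ^ (α - 1) * (u - s) ^ α) volume a b := by
  refine (intervalIntegrable_rpow_sub hα s a b).continuousOn_mul fun u hu => ?_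
  rw [uIcc_of_le hab] at hu
  exact (continuousAt_rpow_const _ _ (Or.inl (by linarith [hu.1]))).continuousWithinAt

/-- Near the singularity `u = s` the factor `u ^ (α - 1)` is at most `s ^ (α - 1)`. -/
lemma integral_rpow_mul_rpow_sub_le_of_le_two_mul (hα : -1 < α) (hα1 : α ≤ 1) (hs : 0 < s)
    (hsb : s ≤ b) (hb : b ≤ 2 * s) :
    ∫ u in s..b, u ^ (α - 1) * (u - s) ^ α ≤ s ^ (2 * α) / (α + 1) := by
  calc ∫ u in s..b, u ^ (α - 1) * (u - s) ^ α
      ≤ ∫ u in s..b, s ^ (α - 1) * (u - s) ^ α := by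
        refine integral_mono_on hsb (intervalIntegrable_rpow_mul_rpow_sub hα hs hsb s)
          ((intervalIntegrable_rpow_sub hα s s b).const_mul _) fun u hu => ?_
        exact mul_le_mul_of_nonneg_right (rpow_le_rpow_of_nonpos hs hu.1 (by linarith))
          (rpow_nonneg (by linarith [hu.1]) _)
    _ = s ^ (α - 1) * ((b - s) ^ (α + 1) / (α + 1)) := by
        rw [intervalIntegral.integral_const_mul, integral_rpow_sub hα]
    _ ≤ s ^ (α - 1) * (s ^ (α + 1) / (α + 1)) := by
        gcongr
        · linarith
        · linarith
        · linarith
    _ = s ^ (2 * α) / (α + 1) := by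
        rw [← mul_div_assoc, ← rpow_add hs]
        ring_nf

/-- Away from the singularity `u - s ≥ u / 2`, so the integrand is at most
`2 ^ (-α) u ^ (2α - 1)`. -/
lemma integral_two_mul_rpow_mul_rpow_sub_le (hα : -1 < α) (hα0 : α < 0) (hs : 0 < s)
    (hb : 2 * s ≤ b) :
    ∫ u in 2 * s..b, u ^ (α - 1) * (u - s) ^ α ≤ s ^ (2 * α) / (-(2 * α)) := by
  have h2s : 0 < 2 * s := by linarith
  have h0 : (0 : ℝ) ∉ uIcc (2 * s) b := by
    rw [uIcc_of_le hb]; exact fun h => h2s.not_ge h.1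
  calc ∫ u in 2 * s..b, u ^ (α - 1) * (u - s) ^ α
      ≤ ∫ u in 2 * s..b, (2 : ℝ) ^ (-α) * u ^ (2 * α - 1) := by
        refine integral_mono_on hb (intervalIntegrable_rpow_mul_rpow_sub hα h2s hb s)
          ((intervalIntegrable_rpow (Or.inr h0)).const_mul _) fun u hu => ?_
        have hu0 : 0 < u := h2s.trans_le hu.1
        calc u ^ (α - 1) * (u - s) ^ α ≤ u ^ (α - 1) * (u / 2) ^ α :=
              mul_le_mul_of_nonneg_left
                (rpow_le_rpow_of_nonpos (by linarith [hu.1]) (by linarith [hu.1]) hα0.le)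
                (rpow_nonneg hu0.le _)
          _ = (2 : ℝ) ^ (-α) * u ^ (2 * α - 1) := by
              rw [div_rpow hu0.le zero_le_two, rpow_neg zero_le_two, div_eq_inv_mul,
                mul_left_comm, ← rpow_add hu0]
              ring_nf
    _ = (2 : ℝ) ^ (-α) * (((2 * s) ^ (2 * α) - b ^ (2 * α)) / (-(2 * α))) := by
        rw [intervalIntegral.integral_const_mul, integral_rpow (Or.inr ⟨by linarith, h0⟩)]
        rw [sub_add_cancel, ← neg_div_neg_eq, neg_sub]
    _ ≤ (2 : ℝ) ^ (-α) * ((2 * s) ^ (2 * α) / (-(2 * α))) := by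
        gcongr
        · linarith
        · exact sub_le_self _ (rpow_nonneg (by linarith) _)
    _ = (2 : ℝ) ^ α * (s ^ (2 * α) / (-(2 * α))) := by
        rw [mul_rpow zero_le_two hs.le, ← mul_div_assoc, ← mul_assoc, ← rpow_add zero_lt_two]
        ring_nf
    _ ≤ s ^ (2 * α) / (-(2 * α)) := by
        refine mul_le_of_le_one_left (div_nonneg (rpow_nonneg hs.le _) (by linarith)) ?_
        exact rpow_le_one_of_one_le_of_nonpos one_le_two hα0.le

lemma integral_rpow_mul_rpow_sub_le (hα : -1 < α) (hα0 : α < 0) (hs : 0 < s) (hsb : s ≤ b) :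
    ∫ u in s..b, u ^ (α - 1) * (u - s) ^ α ≤ (1 / (α + 1) + 1 / (-(2 * α))) * s ^ (2 * α) := by
  have hfar : 0 ≤ s ^ (2 * α) / (-(2 * α)) := div_nonneg (rpow_nonneg hs.le _) (by linarith)
  rw [show (1 / (α + 1) + 1 / (-(2 * α))) * s ^ (2 * α) =
    s ^ (2 * α) / (α + 1) + s ^ (2 * α) / (-(2 * α)) by ring]
  rcases le_total b (2 * s) with hb | hb
  · exact (integral_rpow_mul_rpow_sub_le_of_le_two_mul hα (by linarith) hs hsb hb).trans
      (le_add_of_nonneg_right hfar)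
  · rw [← integral_add_adjacent_intervals
      (intervalIntegrable_rpow_mul_rpow_sub hα hs (by linarith) s)
      (intervalIntegrable_rpow_mul_rpow_sub hα (by linarith) hb s)]
    exact add_le_add
      (integral_rpow_mul_rpow_sub_le_of_le_two_mul hα (by linarith) hs (by linarith) le_rfl)
      (integral_two_mul_rpow_mul_rpow_sub_le hα hα0 hs hb)

end RpowKernel

section KernelBounds

variable {H s t T : ℝ}

lemma abs_KHt_le (hH : H < 1 / 2) (hs : 0 < s) (hst : s < t) :
    |KHt H t s| ≤ |cH H| * (1 / 2 - H) * (t - s) ^ (H - 3 / 2) := by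
  have hratio : (t / s) ^ (H - 1 / 2) ≤ 1 :=
    rpow_le_one_of_one_le_of_nonpos ((one_le_div hs).2 hst.le) (by linarith)
  rw [KHt, abs_mul, abs_mul, abs_mul, abs_of_neg (by linarith : H - 1 / 2 < 0),
    abs_of_nonneg (rpow_nonneg (div_nonneg (by linarith) hs.le) _),
    abs_of_nonneg (rpow_nonneg (by linarith) _)]
  calc |cH H| * -(H - 1 / 2) * (t / s) ^ (H - 1 / 2) * (t - s) ^ (H - 3 / 2)
      ≤ |cH H| * -(H - 1 / 2) * 1 * (t - s) ^ (H - 3 / 2) := by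
        gcongr
        exact mul_nonneg (abs_nonneg _) (by linarith)
    _ = |cH H| * (1 / 2 - H) * (t - s) ^ (H - 3 / 2) := by ring

lemma abs_KH_le (hH0 : 0 < H) (hH : H < 1 / 2) (hs : 0 < s) (hsT : s < T) :
    |KH H T s| ≤ |cH H| * (1 + (1 / 2 - H) * (1 / (H + 1 / 2) + 1 / (1 - 2 * H))) *
      ((T - s) ^ (H - 1 / 2) + s ^ (H - 1 / 2)) := by
  set C := 1 / (H + 1 / 2) + 1 / (1 - 2 * H)
  set R := ∫ u in s..T, u ^ (H - 3 / 2) * (u - s) ^ (H - 1 / 2)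
  have hC : 0 ≤ C :=
    add_nonneg (div_nonneg zero_le_one (by linarith)) (div_nonneg zero_le_one (by linarith))
  have hR : R ≤ C * s ^ (2 * H - 1) := by
    have h := integral_rpow_mul_rpow_sub_le (α := H - 1 / 2) (by linarith) (by linarith) hs hsT.le
    convert h using 3 <;> ring_nf
  have hR0 : 0 ≤ R := integral_nonneg hsT.le fun u hu =>
    mul_nonneg (rpow_nonneg (by linarith [hu.1]) _) (rpow_nonneg (by linarith [hu.1]) _)
  have hx : 0 ≤ (T - s) ^ (H - 1 / 2) := rpow_nonneg (by linarith) _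
  have hy : 0 ≤ s ^ (H - 1 / 2) := rpow_nonneg hs.le _
  have hP : |(T / s) ^ (H - 1 / 2) * (T - s) ^ (H - 1 / 2)| ≤ (T - s) ^ (H - 1 / 2) := by
    rw [abs_of_nonneg (mul_nonneg (rpow_nonneg (div_nonneg (by linarith) hs.le) _) hx)]
    exact mul_le_of_le_one_left hx
      (rpow_le_one_of_one_le_of_nonpos ((one_le_div hs).2 hsT.le) (by linarith))
  have hQ : |(H - 1 / 2) * s ^ (1 / 2 - H) * R| ≤ (1 / 2 - H) * C * s ^ (H - 1 / 2) := by
    have hpow : s ^ (1 / 2 - H) * s ^ (2 * H - 1) = s ^ (H - 1 / 2) := by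
      rw [← rpow_add hs]; ring_nf
    rw [abs_mul, abs_mul, abs_of_neg (by linarith : H - 1 / 2 < 0),
      abs_of_nonneg (rpow_nonneg hs.le _), abs_of_nonneg hR0]
    calc -(H - 1 / 2) * s ^ (1 / 2 - H) * R
        ≤ -(H - 1 / 2) * s ^ (1 / 2 - H) * (C * s ^ (2 * H - 1)) := by
          gcongr
          exact mul_nonneg (by linarith) (rpow_nonneg hs.le _)
      _ = (1 / 2 - H) * C * s ^ (H - 1 / 2) := by rw [← hpow]; ring
  have hCH : 0 ≤ (1 / 2 - H) * C := mul_nonneg (by linarith) hC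
  rw [KH, abs_mul, mul_assoc |cH H|]
  refine mul_le_mul_of_nonneg_left ?_ (abs_nonneg (cH H))
  refine (abs_sub _ _).trans ((add_le_add hP hQ).trans ?_)
  nlinarith [mul_nonneg hCH hx]

lemma exists_abs_KH_abs_KHt_le (hH0 : 0 < H) (hH : H < 1 / 2) :
    ∃ M, 0 < M ∧ ∀ s T, 0 < s → s < T →
      |KH H T s| ≤ M * ((T - s) ^ (H - 1 / 2) + s ^ (H - 1 / 2)) ∧
      ∀ t, s < t → |KHt H t s| ≤ M * (t - s) ^ (H - 3 / 2) := by
  set B := |cH H| * (1 + (1 / 2 - H) * (1 / (H + 1 / 2) + 1 / (1 - 2 * H)))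
  have hC : 0 ≤ (1 / 2 - H) * (1 / (H + 1 / 2) + 1 / (1 - 2 * H)) :=
    mul_nonneg (by linarith)
      (add_nonneg (div_nonneg zero_le_one (by linarith)) (div_nonneg zero_le_one (by linarith)))
  have hAB : |cH H| * (1 / 2 - H) ≤ B :=
    mul_le_mul_of_nonneg_left (by linarith) (abs_nonneg _)
  have hB : 0 ≤ B := mul_nonneg (abs_nonneg _) (by linarith)
  refine ⟨B + 1, by linarith, fun s T hs hsT => ⟨?_, fun t hst => ?_⟩⟩
  · exact (abs_KH_le hH0 hH hs hsT).trans (mul_le_mul_of_nonneg_right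
      (le_add_of_nonneg_right zero_le_one)
      (add_nonneg (rpow_nonneg (by linarith) _) (rpow_nonneg hs.le _)))
  · exact (abs_KHt_le hH hs hst).trans
      (mul_le_mul_of_nonneg_right (by linarith) (rpow_nonneg (by linarith) _))

end KernelBounds

noncomputable def normKInner (H T : ℝ) (φ : ℝ → ℝ) (s : ℝ) : ENNReal :=
  ∫⁻ t in Ioo s T, ENNReal.ofReal (|φ t - φ s| * (t - s) ^ (H - 3 / 2))

lemma measurable_setLIntegral_Ioo {f : ℝ → ℝ → ENNReal} (hf : Measurable (Function.uncurry f))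
    (T : ℝ) : Measurable fun s => ∫⁻ t in Ioo s T, f s t := by
  simp_rw [← lintegral_indicator measurableSet_Ioo, indicator, mem_Ioo]
  have hset : MeasurableSet {p : ℝ × ℝ | p.1 < p.2 ∧ p.2 < T} :=
    (measurableSet_lt measurable_fst measurable_snd).inter
      (measurableSet_lt measurable_snd measurable_const)
  exact (Measurable.ite hset hf measurable_const).lintegral_prod_right'

lemma ENNReal.add_sq_le (a b : ENNReal) : (a + b) ^ 2 ≤ 2 * (a ^ 2 + b ^ 2) := by
  have h := ENNReal.rpow_add_le_mul_rpow_add_rpow a b (p := 2) one_le_two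
  norm_num at h
  exact h

section NormK

variable {H T M s : ℝ} {φ : ℝ → ℝ}

lemma measurable_normKInner (hφ : Measurable φ) : Measurable (normKInner H T φ) :=
  measurable_setLIntegral_Ioo (f := fun s t => ENNReal.ofReal (|φ t - φ s| * (t - s) ^ (H - 3 / 2)))
    (by unfold Function.uncurry; fun_prop) T

lemma ae_normKInner_lt_top (hφ : Measurable φ) (hK : normKsq H T φ < ⊤) :
    ∀ᵐ s ∂volume.restrict (Ioo 0 T), normKInner H T φ s < ⊤ := by
  have hsq : ∫⁻ s in Ioo 0 T, normKInner H T φ s ^ 2 < ⊤ := le_add_self.trans_lt hK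
  filter_upwards [ae_lt_top ((measurable_normKInner hφ).pow_const 2) hsq.ne] with s hs
  simpa using hs

lemma lintegral_enorm_mul_KHt_le (hM : 0 ≤ M)
    (hKHt : ∀ t, s < t → |KHt H t s| ≤ M * (t - s) ^ (H - 3 / 2)) :
    ∫⁻ t in Ioo s T, ‖(φ t - φ s) * KHt H t s‖ₑ ≤ ENNReal.ofReal M * normKInner H T φ s := by
  rw [normKInner, ← lintegral_const_mul' _ _ ENNReal.ofReal_ne_top]
  refine setLIntegral_mono' measurableSet_Ioo fun t ht => ?_
  rw [Real.enorm_eq_ofReal_abs, ← ENNReal.ofReal_mul hM, abs_mul]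
  refine ENNReal.ofReal_le_ofReal ?_
  calc |φ t - φ s| * |KHt H t s| ≤ |φ t - φ s| * (M * (t - s) ^ (H - 3 / 2)) :=
        mul_le_mul_of_nonneg_left (hKHt t ht.1) (abs_nonneg _)
    _ = M * (|φ t - φ s| * (t - s) ^ (H - 3 / 2)) := by ring

lemma integrableOn_mul_KHt (hφ : Measurable φ) (hM : 0 ≤ M)
    (hKHt : ∀ t, s < t → |KHt H t s| ≤ M * (t - s) ^ (H - 3 / 2))
    (hL : normKInner H T φ s < ⊤) :
    IntegrableOn (fun t => (φ t - φ s) * KHt H t s) (Ioo s T) :=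
  ⟨by unfold KHt; fun_prop,
    (lintegral_enorm_mul_KHt_le hM hKHt).trans_lt (ENNReal.mul_lt_top ENNReal.ofReal_lt_top hL)⟩

lemma KH_mul_sq_le (hs : 0 < s) (hsT : s < T)
    (hKH : |KH H T s| ≤ M * ((T - s) ^ (H - 1 / 2) + s ^ (H - 1 / 2))) :
    (KH H T s * φ s) ^ 2 ≤ 2 * M ^ 2 * (φ s ^ 2 * ((T - s) ^ (2 * H - 1) + s ^ (2 * H - 1))) := by
  have hsq : ∀ x : ℝ, 0 ≤ x → (x ^ (H - 1 / 2)) ^ 2 = x ^ (2 * H - 1) := fun x hx => by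
    rw [← rpow_mul_natCast hx]; ring_nf
  have hKH2 : KH H T s ^ 2 ≤ 2 * M ^ 2 * ((T - s) ^ (2 * H - 1) + s ^ (2 * H - 1)) := by
    rw [← hsq _ (by linarith), ← hsq _ hs.le]
    calc KH H T s ^ 2 ≤ (M * ((T - s) ^ (H - 1 / 2) + s ^ (H - 1 / 2))) ^ 2 :=
          sq_le_sq' (neg_le_of_abs_le hKH) (le_of_abs_le hKH)
      _ ≤ M ^ 2 * (2 * (((T - s) ^ (H - 1 / 2)) ^ 2 + (s ^ (H - 1 / 2)) ^ 2)) := by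
          rw [mul_pow]; gcongr; exact add_sq_le
      _ = _ := by ring
  rw [mul_pow]
  nlinarith [mul_le_mul_of_nonneg_right hKH2 (sq_nonneg (φ s))]

lemma ofReal_sq_eq_enorm_sq (x : ℝ) : ENNReal.ofReal (x ^ 2) = ‖x‖ₑ ^ 2 := by
  rw [Real.enorm_eq_ofReal_abs, ← ENNReal.ofReal_pow (abs_nonneg x), sq_abs]

lemma ofReal_KHstar_sq_le (hM : 0 ≤ M) (hs : 0 < s) (hsT : s < T)
    (hKH : |KH H T s| ≤ M * ((T - s) ^ (H - 1 / 2) + s ^ (H - 1 / 2)))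
    (hKHt : ∀ t, s < t → |KHt H t s| ≤ M * (t - s) ^ (H - 3 / 2)) :
    ENNReal.ofReal (KHstar H T φ s ^ 2) ≤ ENNReal.ofReal (4 * M ^ 2) *
      (ENNReal.ofReal (φ s ^ 2 * ((T - s) ^ (2 * H - 1) + s ^ (2 * H - 1))) +
        normKInner H T φ s ^ 2) := by
  set X := ENNReal.ofReal (φ s ^ 2 * ((T - s) ^ (2 * H - 1) + s ^ (2 * H - 1)))
  set L := normKInner H T φ s
  have hint : ‖∫ t in Ioo s T, (φ t - φ s) * KHt H t s‖ₑ ≤ ENNReal.ofReal M * L :=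
    (enorm_integral_le_lintegral_enorm _).trans (lintegral_enorm_mul_KHt_le hM hKHt)
  have hloc : ‖KH H T s * φ s‖ₑ ^ 2 ≤ ENNReal.ofReal (2 * M ^ 2) * X := by
    rw [← ofReal_sq_eq_enorm_sq, ← ENNReal.ofReal_mul (by positivity)]
    exact ENNReal.ofReal_le_ofReal (KH_mul_sq_le hs hsT hKH)
  calc ENNReal.ofReal (KHstar H T φ s ^ 2) = ‖KHstar H T φ s‖ₑ ^ 2 := ofReal_sq_eq_enorm_sq _
    _ ≤ (‖KH H T s * φ s‖ₑ + ENNReal.ofReal M * L) ^ 2 := by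
        gcongr
        exact (enorm_add_le _ _).trans (add_le_add le_rfl hint)
    _ ≤ 2 * (‖KH H T s * φ s‖ₑ ^ 2 + (ENNReal.ofReal M * L) ^ 2) := ENNReal.add_sq_le _ _
    _ ≤ 2 * (ENNReal.ofReal (2 * M ^ 2) * X + ENNReal.ofReal M ^ 2 * L ^ 2) := by
        rw [mul_pow]; gcongr
    _ ≤ ENNReal.ofReal (4 * M ^ 2) * (X + L ^ 2) := by
        rw [mul_add, mul_add, ← mul_assoc, ← mul_assoc]
        gcongr ?_ * X + ?_ * L ^ 2
        · rw [← ENNReal.ofReal_ofNat 2, ← ENNReal.ofReal_mul zero_le_two]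
          exact ENNReal.ofReal_le_ofReal (by linarith)
        · rw [← ENNReal.ofReal_pow hM, ← ENNReal.ofReal_ofNat 2, ← ENNReal.ofReal_mul zero_le_two]
          exact ENNReal.ofReal_le_ofReal (by nlinarith [sq_nonneg M])

end NormK

theorem KHstar_L2_bound_general (H T : ℝ) (hH0 : 0 < H) (hH : H < 1 / 2) :
    ∃ kH : ℝ, 0 < kH ∧ ∀ φ : ℝ → ℝ, Measurable φ → normKsq H T φ < ⊤ →
      (∀ᵐ s ∂(volume.restrict (Set.Ioo 0 T)),
        IntegrableOn (fun t => (φ t - φ s) * KHt H t s) (Set.Ioo s T)) ∧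
      ∫⁻ s in Set.Ioo 0 T, ENNReal.ofReal ((KHstar H T φ s) ^ 2) ≤
        ENNReal.ofReal kH * normKsq H T φ := by
  obtain ⟨M, hM, hKH⟩ := exists_abs_KH_abs_KHt_le hH0 hH
  refine ⟨4 * M ^ 2, by positivity, fun φ hφ hK => ⟨?_, ?_⟩⟩
  · filter_upwards [ae_normKInner_lt_top hφ hK, ae_restrict_mem measurableSet_Ioo]
      with s hL hs
    exact integrableOn_mul_KHt hφ hM.le (hKH s T hs.1 hs.2).2 hL
  · calc ∫⁻ s in Ioo 0 T, ENNReal.ofReal (KHstar H T φ s ^ 2)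
        ≤ ∫⁻ s in Ioo 0 T, ENNReal.ofReal (4 * M ^ 2) *
            (ENNReal.ofReal (φ s ^ 2 * ((T - s) ^ (2 * H - 1) + s ^ (2 * H - 1))) +
              normKInner H T φ s ^ 2) :=
          setLIntegral_mono' measurableSet_Ioo fun s hs =>
            ofReal_KHstar_sq_le hM.le hs.1 hs.2 (hKH s T hs.1 hs.2).1 (hKH s T hs.1 hs.2).2
      _ = ENNReal.ofReal (4 * M ^ 2) * normKsq H T φ := by
          rw [lintegral_const_mul' _ _ ENNReal.ofReal_ne_top,
            lintegral_add_right _ ((measurable_normKInner hφ).pow_const 2)]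
          rfl

/-- for `0 < H < 1/2` and `T > 0` there is a constant `k_H` such that for every
measurable `φ : [0,T] → ℝ` with `‖φ‖_K² < ∞`, the integral defining `(K_H^*φ)(s)` converges
absolutely for a.e. `s ∈ (0,T)` and `∫_0^T (K_H^*φ)(s)² ds ≤ k_H ‖φ‖_K²`. -/
theorem KHstar_L2_bound (H T : ℝ) (hH0 : 0 < H) (hH : H < 1 / 2) (hT : 0 < T) :
    ∃ kH : ℝ, 0 < kH ∧ ∀ φ : ℝ → ℝ, Measurable φ → normKsq H T φ < ⊤ →
      (∀ᵐ s ∂(volume.restrict (Set.Ioo 0 T)),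
        IntegrableOn (fun t => (φ t - φ s) * KHt H t s) (Set.Ioo s T)) ∧
      ∫⁻ s in Set.Ioo 0 T, ENNReal.ofReal ((KHstar H T φ s) ^ 2) ≤
        ENNReal.ofReal kH * normKsq H T φ :=
  KHstar_L2_bound_general H T hH0 hH
end

section
/- Let 0 < H < 1/2 and 0 ≤ a ≤ b. Then ∫_0^a ( (a−s)^{H−1/2} − (b−s)^{H−1/2} )² ds ≤ (1/(2H)) (b−a)^{2H}. -/
open MeasureTheory Real

/-- for `0 < H < 1/2` and `0 ≤ a ≤ b`,
`∫_0^a ((a-s)^{H-1/2} - (b-s)^{H-1/2})² ds ≤ (1/(2H)) (b-a)^{2H}`. -/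
theorem integral_diff_rpow_le (H a b : ℝ) (hH0 : 0 < H) (hH : H < 1 / 2)
    (ha : 0 ≤ a) (hab : a ≤ b) :
    ∫ s in Set.Ioo 0 a, ((a - s) ^ (H - 1 / 2) - (b - s) ^ (H - 1 / 2)) ^ 2 ≤
      1 / (2 * H) * (b - a) ^ (2 * H) := by
  set γ : ℝ := H - 1 / 2 with hγ
  set p : ℝ := 2 * H - 1 with hp
  have hγneg : γ < 0 := by simp [hγ]; linarith
  have hpneg : -1 < p := by simp [hp]; linarith
  have hp1 : p + 1 = 2 * H := by ring
  have h2H : (0:ℝ) < 2 * H := by linarith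
  set f : ℝ → ℝ := fun s => ((a - s) ^ γ - (b - s) ^ γ) ^ 2 with hf
  set g : ℝ → ℝ := fun s => (a - s) ^ p - (b - s) ^ p with hg
  -- interval integrability of pieces of g
  have I1 : IntervalIntegrable (fun s => (a - s) ^ p) volume 0 a := by
    have := (intervalIntegral.intervalIntegrable_rpow' (a := 0) (b := a) hpneg).comp_sub_left a
    simpa using this.symm
  have I2 : IntervalIntegrable (fun s => (b - s) ^ p) volume 0 a := by
    have := (intervalIntegral.intervalIntegrable_rpow' (a := b - a) (b := b) hpneg).comp_sub_left b
    simpa using this.symm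
  have Ig : IntervalIntegrable g volume 0 a := I1.sub I2
  have hgOn : IntegrableOn g (Set.Ioo 0 a) := by
    exact Ig.1.mono_set Set.Ioo_subset_Ioc_self
  -- pointwise bound on Ioo
  have hbound : ∀ s ∈ Set.Ioo 0 a, f s ≤ g s := by
    intro s hs
    obtain ⟨hs0, hsa⟩ := hs
    have h1 : (0:ℝ) < a - s := by linarith
    have h2 : a - s ≤ b - s := by linarith
    have h3 : (0:ℝ) < b - s := lt_of_lt_of_le h1 h2
    have hyx : (b - s) ^ γ ≤ (a - s) ^ γ :=
      Real.rpow_le_rpow_of_nonpos h1 h2 (le_of_lt hγneg)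
    have hy0 : (0:ℝ) < (b - s) ^ γ := Real.rpow_pos_of_pos h3 γ
    have hxsq : ((a - s) ^ γ) ^ 2 = (a - s) ^ p := by
      rw [← Real.rpow_natCast ((a - s) ^ γ) 2, ← Real.rpow_mul h1.le]
      norm_num [hγ, hp]; ring_nf
    have hysq : ((b - s) ^ γ) ^ 2 = (b - s) ^ p := by
      rw [← Real.rpow_natCast ((b - s) ^ γ) 2, ← Real.rpow_mul h3.le]
      norm_num [hγ, hp]; ring_nf
    have : ((a - s) ^ γ - (b - s) ^ γ) ^ 2 ≤ ((a - s) ^ γ) ^ 2 - ((b - s) ^ γ) ^ 2 := by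
      nlinarith [hy0, hyx]
    calc f s ≤ ((a - s) ^ γ) ^ 2 - ((b - s) ^ γ) ^ 2 := this
      _ = g s := by rw [hxsq, hysq]
  have hf_nonneg : ∀ s, 0 ≤ f s := fun s => sq_nonneg _
  have hfmeas : AEStronglyMeasurable f (volume.restrict (Set.Ioo 0 a)) := by
    apply Measurable.aestronglyMeasurable
    fun_prop
  have hfOn : IntegrableOn f (Set.Ioo 0 a) := by
    refine hgOn.mono' hfmeas ?_
    filter_upwards [ae_restrict_mem measurableSet_Ioo] with s hs
    rw [Real.norm_of_nonneg (hf_nonneg s)]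
    exact hbound s hs
  have hmono : ∫ s in Set.Ioo 0 a, f s ≤ ∫ s in Set.Ioo 0 a, g s :=
    setIntegral_mono_on hfOn hgOn measurableSet_Ioo hbound
  -- compute ∫ g
  have hIoo : ∫ s in Set.Ioo 0 a, g s = ∫ s in (0:ℝ)..a, g s := by
    rw [intervalIntegral.integral_of_le ha, integral_Ioc_eq_integral_Ioo]
  have e1 : ∫ s in (0:ℝ)..a, (a - s) ^ p = a ^ (2*H) / (2*H) := by
    rw [intervalIntegral.integral_comp_sub_left (fun x => x ^ p) a]
    simp only [sub_self, sub_zero]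
    rw [integral_rpow (Or.inl hpneg), hp1, Real.zero_rpow (ne_of_gt h2H), sub_zero]
  have e2 : ∫ s in (0:ℝ)..a, (b - s) ^ p = (b ^ (2*H) - (b - a) ^ (2*H)) / (2*H) := by
    rw [intervalIntegral.integral_comp_sub_left (fun x => x ^ p) b]
    simp only [sub_zero]
    rw [integral_rpow (Or.inl hpneg), hp1]
  have hgval : ∫ s in (0:ℝ)..a, g s
      = a ^ (2*H) / (2*H) - (b ^ (2*H) - (b - a) ^ (2*H)) / (2*H) := by
    rw [show (fun s => g s) = fun s => (a - s) ^ p - (b - s) ^ p from rfl,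
      intervalIntegral.integral_sub I1 I2, e1, e2]
  have hab2H : a ^ (2*H) ≤ b ^ (2*H) := Real.rpow_le_rpow ha hab h2H.le
  calc ∫ s in Set.Ioo 0 a, f s ≤ ∫ s in Set.Ioo 0 a, g s := hmono
    _ = a ^ (2*H) / (2*H) - (b ^ (2*H) - (b - a) ^ (2*H)) / (2*H) := by rw [hIoo, hgval]
    _ = (a ^ (2*H) - b ^ (2*H) + (b - a) ^ (2*H)) / (2*H) := by ring
    _ ≤ (b - a) ^ (2 * H) / (2 * H) := by
        gcongr
        linarith
    _ = 1 / (2 * H) * (b - a) ^ (2 * H) := by ring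
end

section
/- Let d ≥ 1, fix i ∈ {1,…,d}, and define φ : ℝ^d \ {0} → ℝ by φ(x) = ‖x‖^{−1} − x_i² ‖x‖^{−3}, where ‖·‖ is the Euclidean norm. There exists a universal constant C (independent of d, i, x, y and α; one may take C = 8) such that for all nonzero x, y ∈ ℝ^d and every α ∈ [0,1], |φ(x) − φ(y)| ≤ C ‖x−y‖^α max( ‖x‖^{−α−1}, ‖y‖^{−α−1} ). -/
open Real

/-- The Euclidean norm on `ℝ^d`. -/
noncomputable def euclNorm (d : ℕ) (x : Fin d → ℝ) : ℝ := Real.sqrt (∑ k, x k ^ 2)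

/-!
Write `φ(x) = (1 - s²) / ‖x‖` with `s = ℓ x / ‖x‖ ∈ [-1, 1]`, where `ℓ` is the `i`-th coordinate
(any functional of norm at most `1` will do). Since `0 ≤ φ(x) ≤ ‖x‖⁻¹`, we have
`|φ(x) - φ(y)| ≤ M := max ‖x‖⁻¹ ‖y‖⁻¹`. Since `s` moves by at most `2‖x - y‖ / ‖x‖`, we also have
`|φ(x) - φ(y)| ≤ 5‖x - y‖ / (‖x‖‖y‖) ≤ 5‖x - y‖ M²`. Interpolating the two bounds
(`t ≤ A`, `t ≤ B` give `t ≤ A^(1-α) B^α`) yields the claim with `C = 5`.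
-/

theorem le_rpow_mul_rpow_of_le_of_le {t A B α : ℝ} (ht : 0 ≤ t) (hA : t ≤ A) (hB : t ≤ B)
    (hα₀ : 0 ≤ α) (hα₁ : α ≤ 1) : t ≤ A ^ (1 - α) * B ^ α :=
  calc t = t ^ (1 - α) * t ^ α := by rw [← rpow_add' ht (by norm_num), sub_add_cancel, rpow_one]
    _ ≤ A ^ (1 - α) * B ^ α :=
      mul_le_mul (rpow_le_rpow ht hA (by linarith)) (rpow_le_rpow ht hB hα₀)
        (rpow_nonneg ht _) (rpow_nonneg (ht.trans hA) _)

theorem abs_one_sub_sq_div_sub_le {a b s t r : ℝ} (ha : 0 < a) (hb : 0 < b) (hs : |s| ≤ 1)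
    (ht : |t| ≤ 1) (hab : |a - b| ≤ r) (hst : |s - t| ≤ 2 * r / a) :
    |(1 - s ^ 2) / a - (1 - t ^ 2) / b| ≤ 5 * r / (a * b) := by
  have hsplit : (1 - s ^ 2) / a - (1 - t ^ 2) / b
      = (1 - s ^ 2) * (b - a) / (a * b) + (t - s) * (t + s) / b := by
    field_simp; ring
  have h₁ : |(1 - s ^ 2) * (b - a) / (a * b)| ≤ r / (a * b) := by
    rw [abs_div, abs_mul, abs_of_pos (mul_pos ha hb), abs_sub_comm b]
    have hs2 : |1 - s ^ 2| ≤ 1 := by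
      rw [abs_le]; constructor <;> nlinarith [abs_le.mp hs, sq_nonneg s]
    gcongr
    calc |1 - s ^ 2| * |a - b| ≤ 1 * r := by gcongr
      _ = r := one_mul r
  have h₂ : |(t - s) * (t + s) / b| ≤ 4 * r / (a * b) := by
    rw [abs_div, abs_mul, abs_of_pos hb, abs_sub_comm]
    have hts : |t + s| ≤ 2 := (abs_add_le t s).trans (by linarith)
    have hr : 0 ≤ r := (abs_nonneg _).trans hab
    calc |s - t| * |t + s| / b ≤ 2 * r / a * 2 / b := by gcongr
      _ = 4 * r / (a * b) := by field_simp; ring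
  calc _ ≤ r / (a * b) + 4 * r / (a * b) := by
        rw [hsplit]; exact (abs_add_le _ _).trans (add_le_add h₁ h₂)
    _ = 5 * r / (a * b) := by ring

namespace HolderPhi

variable {E : Type*} [NormedAddCommGroup E] [NormedSpace ℝ E]

noncomputable def phi (ℓ : StrongDual ℝ E) (x : E) : ℝ := ‖x‖⁻¹ - ℓ x ^ 2 * (‖x‖ ^ 3)⁻¹

variable {ℓ : StrongDual ℝ E} {x y : E}

theorem phi_eq_one_sub_sq_div (hx : x ≠ 0) :
    phi ℓ x = (1 - (ℓ x / ‖x‖) ^ 2) / ‖x‖ := by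
  have := norm_pos_iff.mpr hx
  rw [phi]; field_simp

theorem phi_le_inv_norm (x : E) : phi ℓ x ≤ ‖x‖⁻¹ := by
  rw [phi, sub_le_self_iff]; positivity

theorem abs_apply_le_norm (hℓ : ‖ℓ‖ ≤ 1) (x : E) : |ℓ x| ≤ ‖x‖ := by
  simpa using ℓ.le_of_opNorm_le hℓ x

theorem abs_apply_div_norm_le_one (hℓ : ‖ℓ‖ ≤ 1) (x : E) : |ℓ x / ‖x‖| ≤ 1 := by
  rw [abs_div, abs_norm]
  exact div_le_one_of_le₀ (abs_apply_le_norm hℓ x) (norm_nonneg x)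

theorem abs_apply_div_norm_sub_le (hℓ : ‖ℓ‖ ≤ 1) (hx : x ≠ 0) (hy : y ≠ 0) :
    |ℓ x / ‖x‖ - ℓ y / ‖y‖| ≤ 2 * ‖x - y‖ / ‖x‖ := by
  have ha := norm_pos_iff.mpr hx
  have hb := norm_pos_iff.mpr hy
  have hsplit : ℓ x / ‖x‖ - ℓ y / ‖y‖ = ℓ (x - y) / ‖x‖ + ℓ y / ‖y‖ * (‖y‖ - ‖x‖) / ‖x‖ := by
    rw [map_sub]; field_simp; ring
  have h₁ : |ℓ (x - y) / ‖x‖| ≤ ‖x - y‖ / ‖x‖ := by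
    rw [abs_div, abs_norm]; gcongr; exact abs_apply_le_norm hℓ _
  have h₂ : |ℓ y / ‖y‖ * (‖y‖ - ‖x‖) / ‖x‖| ≤ ‖x - y‖ / ‖x‖ := by
    rw [abs_div, abs_mul, abs_norm, abs_sub_comm]
    gcongr
    calc |ℓ y / ‖y‖| * |‖x‖ - ‖y‖| ≤ 1 * ‖x - y‖ :=
          mul_le_mul (abs_apply_div_norm_le_one hℓ y) (abs_norm_sub_norm_le x y)
            (abs_nonneg _) zero_le_one
      _ = ‖x - y‖ := one_mul _
  calc _ ≤ ‖x - y‖ / ‖x‖ + ‖x - y‖ / ‖x‖ := by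
        rw [hsplit]; exact (abs_add_le _ _).trans (add_le_add h₁ h₂)
    _ = 2 * ‖x - y‖ / ‖x‖ := by ring

theorem phi_nonneg (hℓ : ‖ℓ‖ ≤ 1) (x : E) : 0 ≤ phi ℓ x := by
  rcases eq_or_ne x 0 with rfl | hx
  · simp [phi]
  rw [phi_eq_one_sub_sq_div hx]
  have hsq : (ℓ x / ‖x‖) ^ 2 ≤ 1 := by
    rw [sq_le_one_iff_abs_le_one]; exact abs_apply_div_norm_le_one hℓ x
  exact div_nonneg (sub_nonneg.mpr hsq) (norm_nonneg x)

theorem abs_phi_sub_le_max_inv_norm (hℓ : ‖ℓ‖ ≤ 1) (x y : E) :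
    |phi ℓ x - phi ℓ y| ≤ max ‖x‖⁻¹ ‖y‖⁻¹ :=
  abs_sub_le_of_nonneg_of_le (phi_nonneg hℓ x) ((phi_le_inv_norm x).trans (le_max_left _ _))
    (phi_nonneg hℓ y) ((phi_le_inv_norm y).trans (le_max_right _ _))

theorem abs_phi_sub_le_lipschitz (hℓ : ‖ℓ‖ ≤ 1) (hx : x ≠ 0) (hy : y ≠ 0) :
    |phi ℓ x - phi ℓ y| ≤ 5 * ‖x - y‖ / (‖x‖ * ‖y‖) := by
  rw [phi_eq_one_sub_sq_div hx, phi_eq_one_sub_sq_div hy]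
  exact abs_one_sub_sq_div_sub_le (norm_pos_iff.mpr hx) (norm_pos_iff.mpr hy)
    (abs_apply_div_norm_le_one hℓ x) (abs_apply_div_norm_le_one hℓ y) (abs_norm_sub_norm_le x y)
    (abs_apply_div_norm_sub_le hℓ hx hy)

theorem abs_phi_sub_le_holder (hℓ : ‖ℓ‖ ≤ 1) (hx : x ≠ 0) (hy : y ≠ 0) {α : ℝ} (hα₀ : 0 ≤ α)
    (hα₁ : α ≤ 1) :
    |phi ℓ x - phi ℓ y| ≤ 5 * ‖x - y‖ ^ α * max (‖x‖ ^ (-α - 1)) (‖y‖ ^ (-α - 1)) := by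
  set M := max ‖x‖⁻¹ ‖y‖⁻¹
  have hM : 0 < M := lt_max_of_lt_left (inv_pos.mpr (norm_pos_iff.mpr hx))
  have hlip : |phi ℓ x - phi ℓ y| ≤ 5 * ‖x - y‖ * M ^ 2 :=
    calc _ ≤ 5 * ‖x - y‖ / (‖x‖ * ‖y‖) := abs_phi_sub_le_lipschitz hℓ hx hy
      _ = 5 * ‖x - y‖ * (‖x‖⁻¹ * ‖y‖⁻¹) := by ring
      _ ≤ 5 * ‖x - y‖ * M ^ 2 := by
          rw [sq]; gcongr
          exacts [le_max_left _ _, le_max_right _ _]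
  have hM_rpow : M ^ (1 + α) ≤ max (‖x‖ ^ (-α - 1)) (‖y‖ ^ (-α - 1)) := by
    rw [show -α - 1 = -(1 + α) by ring, rpow_neg (norm_nonneg x), rpow_neg (norm_nonneg y),
      ← inv_rpow (norm_nonneg x), ← inv_rpow (norm_nonneg y)]
    rcases max_choice ‖x‖⁻¹ ‖y‖⁻¹ with h | h
    · exact h ▸ le_max_left _ _
    · exact h ▸ le_max_right _ _
  calc _ ≤ M ^ (1 - α) * (5 * ‖x - y‖ * M ^ 2) ^ α :=
        le_rpow_mul_rpow_of_le_of_le (abs_nonneg _) (abs_phi_sub_le_max_inv_norm hℓ x y) hlip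
          hα₀ hα₁
    _ = 5 ^ α * ‖x - y‖ ^ α * M ^ (1 + α) := by
        rw [mul_rpow (by positivity) (by positivity), mul_rpow (by positivity) (by positivity),
          ← rpow_natCast_mul hM.le, mul_comm (M ^ (1 - α)), mul_assoc, ← rpow_add hM]
        push_cast; ring_nf
    _ ≤ 5 * ‖x - y‖ ^ α * max (‖x‖ ^ (-α - 1)) (‖y‖ ^ (-α - 1)) := by
        gcongr
        exact rpow_le_self_of_one_le (by norm_num) hα₁

theorem euclNorm_eq_norm_toLp {d : ℕ} (x : Fin d → ℝ) : euclNorm d x = ‖WithLp.toLp 2 x‖ := by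
  simp [EuclideanSpace.norm_eq, euclNorm]

theorem norm_euclideanSpace_proj_le_one {ι : Type*} [Fintype ι] (i : ι) :
    ‖(EuclideanSpace.proj i : StrongDual ℝ (EuclideanSpace ℝ ι))‖ ≤ 1 :=
  ContinuousLinearMap.opNorm_le_bound _ zero_le_one fun v => by
    simpa using PiLp.norm_apply_le v i

theorem phi_euclideanSpace_proj {d : ℕ} (i : Fin d) (x : Fin d → ℝ) :
    phi (EuclideanSpace.proj i) (WithLp.toLp 2 x)
      = (euclNorm d x)⁻¹ - x i ^ 2 * euclNorm d x ^ (-(3:ℝ)) := by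
  rw [phi, euclNorm_eq_norm_toLp, rpow_neg (norm_nonneg _)]
  norm_cast

end HolderPhi

/-- for `φ(x) = ‖x‖^{-1} - x_i² ‖x‖^{-3}` there is a universal constant `C`
(independent of `d`, `i`, `x`, `y`, `α`) such that for all nonzero `x, y ∈ ℝ^d` and `α ∈ [0,1]`,
`|φ(x) - φ(y)| ≤ C ‖x-y‖^α max(‖x‖^{-α-1}, ‖y‖^{-α-1})`. -/
theorem phi_holder_bound :
    ∃ C : ℝ, 0 < C ∧ ∀ (d : ℕ), 1 ≤ d → ∀ i : Fin d, ∀ x y : Fin d → ℝ,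
      x ≠ 0 → y ≠ 0 → ∀ α : ℝ, 0 ≤ α → α ≤ 1 →
      |((euclNorm d x)⁻¹ - x i ^ 2 * euclNorm d x ^ (-(3:ℝ))) -
        ((euclNorm d y)⁻¹ - y i ^ 2 * euclNorm d y ^ (-(3:ℝ)))| ≤
      C * euclNorm d (x - y) ^ α *
        max (euclNorm d x ^ (-α - 1)) (euclNorm d y ^ (-α - 1)) := by
  refine ⟨5, by norm_num, fun d _ i x y hx hy α hα₀ hα₁ => ?_⟩
  rw [← HolderPhi.phi_euclideanSpace_proj, ← HolderPhi.phi_euclideanSpace_proj]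
  simp only [HolderPhi.euclNorm_eq_norm_toLp, WithLp.toLp_sub]
  exact HolderPhi.abs_phi_sub_le_holder (HolderPhi.norm_euclideanSpace_proj_le_one i)
    (by simpa using hx) (by simpa using hy) hα₀ hα₁
end

section
/- Let 0 < H < 1/2, T > 0, and let R_H(s,t) = (1/2)(s^{2H} + t^{2H} − |t−s|^{2H}) be the covariance function of fractional Brownian motion, whose partial derivative in s (for s ∈ (0,T), s ≠ t) is ∂R_H/∂s(s,t) = H ( s^{2H−1} − sgn(s−t)|s−t|^{2H−1} ). Then for every p with 1 ≤ p < 1/(1−2H), sup_{t ∈ [0,T]} ∫_0^T | ∂R_H/∂s(s,t) |^p ds < ∞. -/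
/-!
Since `|sgn| ≤ 1`, the integrand is at most `|H|^p 2^(p-1) (s^q + |s - t|^q)` with
`q = (2H - 1) p`, and `p < 1/(1 - 2H)` is exactly `q > -1`. After the shift `u = s - t`, both
terms are bounded by `∫_{-T}^{T} |u|^q du`, which is finite and does not depend on `t`.
-/

open MeasureTheory Real

open Set

lemma Real.abs_sign_le_one (x : ℝ) : |Real.sign x| ≤ 1 := by
  rcases Real.sign_apply_eq x with h | h | h <;> simp [h]

lemma Real.rpow_add_le_mul_rpow_add_rpow {a b p : ℝ} (ha : 0 ≤ a) (hb : 0 ≤ b)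
    (hp : 1 ≤ p) : (a + b) ^ p ≤ 2 ^ (p - 1) * (a ^ p + b ^ p) := by
  lift a to NNReal using ha
  lift b to NNReal using hb
  exact_mod_cast NNReal.rpow_add_le_mul_rpow_add_rpow a b hp

lemma abs_mul_rpow_sub_sign_mul_rpow_rpow_le {x y p : ℝ} (c r z : ℝ) (hx : 0 ≤ x)
    (hy : 0 ≤ y) (hp : 1 ≤ p) :
    |c * (x ^ r - Real.sign z * y ^ r)| ^ p ≤
      |c| ^ p * 2 ^ (p - 1) * (x ^ (r * p) + y ^ (r * p)) := by
  have hxr : 0 ≤ x ^ r := rpow_nonneg hx r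
  have hyr : 0 ≤ y ^ r := rpow_nonneg hy r
  have h_abs : |c * (x ^ r - Real.sign z * y ^ r)| ≤ |c| * (x ^ r + y ^ r) := by
    rw [abs_mul]
    gcongr
    calc |x ^ r - Real.sign z * y ^ r| ≤ |x ^ r| + |Real.sign z| * |y ^ r| := by
          rw [← abs_mul]; exact abs_sub _ _
      _ ≤ x ^ r + 1 * y ^ r := by
          rw [abs_of_nonneg hxr, abs_of_nonneg hyr]; gcongr; exact Real.abs_sign_le_one z
      _ = x ^ r + y ^ r := by rw [one_mul]
  calc |c * (x ^ r - Real.sign z * y ^ r)| ^ p ≤ (|c| * (x ^ r + y ^ r)) ^ p := by gcongr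
    _ = |c| ^ p * (x ^ r + y ^ r) ^ p := mul_rpow (abs_nonneg c) (by positivity)
    _ ≤ |c| ^ p * (2 ^ (p - 1) * ((x ^ r) ^ p + (y ^ r) ^ p)) := by
        gcongr; exact Real.rpow_add_le_mul_rpow_add_rpow hxr hyr hp
    _ = |c| ^ p * 2 ^ (p - 1) * (x ^ (r * p) + y ^ (r * p)) := by
        rw [rpow_mul hx, rpow_mul hy, mul_assoc]

lemma intervalIntegrable_abs_rpow {q : ℝ} (hq : -1 < q) (a b : ℝ) :
    IntervalIntegrable (fun x => |x| ^ q) volume a b := by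
  have h_pos : ∀ c, 0 ≤ c → IntervalIntegrable (fun x => |x| ^ q) volume 0 c := by
    intro c hc
    rw [intervalIntegrable_iff_integrableOn_Ioc_of_le hc]
    refine ((intervalIntegrable_iff_integrableOn_Ioc_of_le hc).1
      (intervalIntegral.intervalIntegrable_rpow' hq)).congr_fun (fun x hx => ?_) measurableSet_Ioc
    rw [abs_of_pos hx.1]
  have h_all : ∀ c, IntervalIntegrable (fun x => |x| ^ q) volume 0 c := by
    intro c
    rcases le_total 0 c with hc | hc
    · exact h_pos c hc
    · simpa using (IntervalIntegrable.iff_comp_neg (by simp)).1 (h_pos (-c) (by linarith))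
  exact (h_all a).symm.trans (h_all b)

lemma setLIntegral_Ioo_comp_sub_le (f : ℝ → ENNReal) {t T : ℝ} (ht : t ∈ Icc 0 T) :
    ∫⁻ s in Ioo 0 T, f (s - t) ≤ ∫⁻ u in Ioo (-T) T, f u := by
  have h_shift : ∫⁻ s in Ioo 0 T, f (s - t) = ∫⁻ u in Ioo (-t) (T - t), f u := by
    simpa using (measurePreserving_sub_right volume t).setLIntegral_comp_preimage_emb
      (measurableEmbedding_subRight t) f (Ioo (-t) (T - t))
  rw [h_shift]
  exact lintegral_mono_set (Ioo_subset_Ioo (by linarith [ht.2]) (by linarith [ht.1]))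

theorem sup_integral_partial_cov_lt_top_general (H T p : ℝ)
    (hp1 : 1 ≤ p) (hp2 : p < 1 / (1 - 2 * H)) :
    ∃ M : ℝ, ∀ t ∈ Set.Icc (0:ℝ) T,
      (∫⁻ s in Set.Ioo (0:ℝ) T,
        ENNReal.ofReal (|H * (s ^ (2 * H - 1) - Real.sign (s - t) * |s - t| ^ (2 * H - 1))| ^ p))
        ≤ ENNReal.ofReal M := by
  set q := (2 * H - 1) * p
  have hq : -1 < q := by
    have h2H : 0 < 1 - 2 * H := by
      by_contra! h
      linarith [one_div_nonpos.2 h]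
    nlinarith [(lt_div_iff₀ h2H).1 hp2]
  have hC : 0 ≤ |H| ^ p * 2 ^ (p - 1) := by positivity
  set C := |H| ^ p * 2 ^ (p - 1)
  set J := ∫⁻ u in Ioo (-T) T, ENNReal.ofReal (|u| ^ q)
  have hJ : J ≠ ⊤ :=
    ((intervalIntegrable_abs_rpow hq (-T) T).def'.mono_set
      (Ioo_subset_Ioc_self.trans Ioc_subset_uIoc)).lintegral_lt_top.ne
  refine ⟨(ENNReal.ofReal C * (J + J)).toReal, fun t ht => ?_⟩
  rw [ENNReal.ofReal_toReal (by finiteness)]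
  -- `s` is written as `s - 0` so that the shift bound at `t = 0` also applies to it.
  calc _ ≤ ∫⁻ s in Ioo 0 T,
          ENNReal.ofReal C * (ENNReal.ofReal (|s - 0| ^ q) + ENNReal.ofReal (|s - t| ^ q)) := by
        refine setLIntegral_mono' measurableSet_Ioo fun s hs => ?_
        rw [sub_zero, abs_of_pos hs.1,
          ← ENNReal.ofReal_add (rpow_nonneg hs.1.le _) (by positivity), ← ENNReal.ofReal_mul hC]
        exact ENNReal.ofReal_le_ofReal
          (abs_mul_rpow_sub_sign_mul_rpow_rpow_le H _ _ hs.1.le (abs_nonneg _) hp1)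
    _ = ENNReal.ofReal C * ((∫⁻ s in Ioo 0 T, ENNReal.ofReal (|s - 0| ^ q))
          + ∫⁻ s in Ioo 0 T, ENNReal.ofReal (|s - t| ^ q)) := by
        rw [lintegral_const_mul' _ _ ENNReal.ofReal_ne_top, lintegral_add_left (by fun_prop)]
    _ ≤ ENNReal.ofReal C * (J + J) := by
        gcongr <;> apply setLIntegral_Ioo_comp_sub_le (fun u => ENNReal.ofReal (|u| ^ q))
        exacts [⟨le_rfl, ht.1.trans ht.2⟩, ht]

/-- for `0 < H < 1/2`, `T > 0` and `1 ≤ p < 1/(1-2H)`, the partial derivative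
`∂R_H/∂s(s,t) = H (s^{2H-1} - sgn(s-t)|s-t|^{2H-1})` of the fBm covariance satisfies
`sup_{t ∈ [0,T]} ∫_0^T |∂R_H/∂s(s,t)|^p ds < ∞`. -/
theorem sup_integral_partial_cov_lt_top (H T p : ℝ) (hH0 : 0 < H) (hH : H < 1 / 2)
    (hT : 0 < T) (hp1 : 1 ≤ p) (hp2 : p < 1 / (1 - 2 * H)) :
    ∃ M : ℝ, ∀ t ∈ Set.Icc (0:ℝ) T,
      (∫⁻ s in Set.Ioo (0:ℝ) T,
        ENNReal.ofReal (|H * (s ^ (2 * H - 1) - Real.sign (s - t) * |s - t| ^ (2 * H - 1))| ^ p))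
        ≤ ENNReal.ofReal M :=
  sup_integral_partial_cov_lt_top_general H T p hp1 hp2
end
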